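/- arXiv:1707.06768 — 3 statements merged into one kernel-verified Lean document; each statement's English description precedes it below -/
import Mathlib

section
/- Let X be a measurable space, ν* a Borel measure on (0,∞)×X, and H a Borel probability measure on (0,∞)^d (d ≥ 1). Let ν̃_d be the pushforward of H ⊗ ν* under (s,(z,x)) ↦ (z·s, x), and for each j let ν_j be the pushforward of H_j ⊗ ν* under (s,(z,x)) ↦ (s·z, x), where H_j is the j-th coordinate marginal of H. Then ∫_{(0,∞)^d×X} min{1,‖s‖} dν̃_d(s,x) ≤ √d · Σ_{j=1}^d ∫_{(0,∞)×X} min{1,u} dν_j(u,x), where ‖·‖ is the Euclidean norm on ℝ^d. -/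
open MeasureTheory Filter Set ProbabilityTheory
open scoped ENNReal

private lemma min_one_mul_le {c t : ℝ} (hc : 1 ≤ c) :
    min 1 (c * t) ≤ c * min 1 t := by
  rcases le_total t 1 with h | h
  · rw [min_eq_right h]
    exact min_le_right _ _
  · rw [min_eq_left h]
    calc min 1 (c * t) ≤ 1 := min_le_left _ _
    _ ≤ c * 1 := by linarith

private lemma key_real {d : ℕ} (hd : 1 ≤ d) (s : EuclideanSpace ℝ (Fin d))
    (hs : ∀ j, 0 < s j) {z : ℝ} (hz : 0 < z) :
    min 1 ‖z • s‖ ≤ Real.sqrt d * ∑ j, min 1 (s j * z) := by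
  have hne : (Finset.univ : Finset (Fin d)).Nonempty := by
    have : Nonempty (Fin d) := ⟨⟨0, hd⟩⟩
    exact Finset.univ_nonempty
  obtain ⟨j₀, -, hj₀⟩ := Finset.exists_max_image Finset.univ (fun j => s j) hne
  have hsqd : (1 : ℝ) ≤ Real.sqrt d := by
    rw [show (1:ℝ) = Real.sqrt 1 by simp]
    exact Real.sqrt_le_sqrt (by exact_mod_cast hd)
  have hnorm : ‖s‖ ≤ Real.sqrt d * s j₀ := by
    rw [EuclideanSpace.norm_eq]
    have h1 : ∑ i, ‖s i‖ ^ 2 ≤ (d : ℝ) * (s j₀) ^ 2 := by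
      calc ∑ i, ‖s i‖ ^ 2 ≤ ∑ _i : Fin d, (s j₀) ^ 2 := by
            apply Finset.sum_le_sum
            intro i _
            rw [Real.norm_eq_abs, sq_abs]
            exact pow_le_pow_left₀ (hs i).le (hj₀ i (Finset.mem_univ i)) 2
        _ = (d : ℝ) * (s j₀) ^ 2 := by
            simp [Finset.sum_const, Finset.card_univ, nsmul_eq_mul]
    calc Real.sqrt (∑ i, ‖s i‖ ^ 2) ≤ Real.sqrt ((d : ℝ) * (s j₀) ^ 2) :=
          Real.sqrt_le_sqrt h1
      _ = Real.sqrt d * s j₀ := by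
          rw [Real.sqrt_mul (by positivity), Real.sqrt_sq (hs j₀).le]
  have h2 : min 1 ‖z • s‖ ≤ Real.sqrt d * min 1 (s j₀ * z) := by
    have hb : ‖z • s‖ ≤ Real.sqrt d * (s j₀ * z) := by
      rw [norm_smul, Real.norm_eq_abs, abs_of_pos hz]
      calc z * ‖s‖ ≤ z * (Real.sqrt d * s j₀) :=
            mul_le_mul_of_nonneg_left hnorm hz.le
        _ = Real.sqrt d * (s j₀ * z) := by ring
    calc min 1 ‖z • s‖ ≤ min 1 (Real.sqrt d * (s j₀ * z)) := min_le_min le_rfl hb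
      _ ≤ Real.sqrt d * min 1 (s j₀ * z) := min_one_mul_le hsqd
  refine h2.trans (mul_le_mul_of_nonneg_left ?_ (by positivity))
  exact Finset.single_le_sum
    (f := fun j => min 1 (s j * z))
    (fun j _ => le_min zero_le_one (mul_pos (hs j) hz).le) (Finset.mem_univ j₀)

/-- If the family `s ↦ (Prod.mk s)_* ν` is a.e. measurable w.r.t. `H`, then the family
`u ↦ (Prod.mk u)_* ν` is a.e. measurable w.r.t. the `j`-th marginal of `H`. -/
private lemma aemeasurable_marginal_family {Y : Type*} [MeasurableSpace Y] {d : ℕ}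
    (ν : Measure Y) (H : Measure (EuclideanSpace ℝ (Fin d))) [IsProbabilityMeasure H]
    (j : Fin d)
    (hm1 : AEMeasurable (fun s : EuclideanSpace ℝ (Fin d) => Measure.map (Prod.mk s) ν) H) :
    AEMeasurable (fun u : ℝ => Measure.map (Prod.mk u) ν)
      (Measure.map (fun s : EuclideanSpace ℝ (Fin d) => s j) H) := by
  classical
  have hπ : Measurable (fun s : EuclideanSpace ℝ (Fin d) => s j) :=
    (measurable_pi_apply j).comp (WithLp.measurable_ofLp 2 _)
  have hgm : Measurable (fun s : EuclideanSpace ℝ (Fin d) => (s j, s)) :=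
    hπ.prodMk measurable_id
  set ρ : Measure (ℝ × EuclideanSpace ℝ (Fin d)) :=
    Measure.map (fun s => (s j, s)) H with hρ
  haveI : IsProbabilityMeasure ρ := Measure.isProbabilityMeasure_map hgm.aemeasurable
  have hfst : ρ.fst = Measure.map (fun s : EuclideanSpace ℝ (Fin d) => s j) H :=
    Measure.fst_map_prodMk measurable_id
  set κ := ρ.condKernel with hκ
  have hdis : ρ.fst ⊗ₘ κ = ρ := ρ.disintegrate κ
  set M := hm1.mk _ with hM
  have hMmeas : Measurable M := hm1.measurable_mk
  have h0 : H {s | ¬ Measure.map (Prod.mk s) ν = M s} = 0 := ae_iff.mp hm1.ae_eq_mk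
  obtain ⟨N, hNsub, hNmeas, hNnull⟩ := exists_measurable_superset_of_null h0
  -- the good event holds ρ-a.e.
  have hPmeas : MeasurableSet {p : ℝ × EuclideanSpace ℝ (Fin d) | p.2 j = p.1 ∧ p.2 ∉ N} := by
    refine (measurableSet_eq_fun (hπ.comp measurable_snd) measurable_fst).inter ?_
    exact (hNmeas.preimage measurable_snd).compl
  have hae : ∀ᵐ p ∂ρ, p.2 j = p.1 ∧ p.2 ∉ N := by
    rw [hρ, ae_map_iff hgm.aemeasurable hPmeas]
    have hN' : ∀ᵐ s ∂H, s ∉ N := by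
      rw [ae_iff]
      simpa using hNnull
    filter_upwards [hN'] with s hsN
    exact ⟨rfl, hsN⟩
  have hae2 : ∀ᵐ u ∂ρ.fst, ∀ᵐ x ∂κ u, x j = u ∧ x ∉ N := by
    rw [← hdis] at hae
    exact Measure.ae_ae_of_ae_compProd hae
  -- the measurable candidate
  have hΦ : Measurable (fun μ' : Measure (EuclideanSpace ℝ (Fin d) × Y) =>
      Measure.map (Prod.map (fun s : EuclideanSpace ℝ (Fin d) => s j) (id : Y → Y)) μ') :=
    Measure.measurable_map _ (hπ.prodMap measurable_id)
  refine ⟨fun u => (κ u).bind (fun x =>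
      Measure.map (Prod.map (fun s : EuclideanSpace ℝ (Fin d) => s j) (id : Y → Y)) (M x)),
    (Measure.measurable_bind' (hΦ.comp hMmeas)).comp κ.measurable, ?_⟩
  rw [← hfst]
  filter_upwards [hae2] with u hu
  have hconst : (fun x => Measure.map
        (Prod.map (fun s : EuclideanSpace ℝ (Fin d) => s j) (id : Y → Y)) (M x))
      =ᵐ[κ u] (fun _ => Measure.map (Prod.mk u) ν) := by
    filter_upwards [hu] with x hx
    obtain ⟨hxj, hxN⟩ := hx
    have hMx : M x = Measure.map (Prod.mk x) ν := by
      by_contra h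
      exact hxN (hNsub (fun hc => h hc.symm))
    rw [hMx, Measure.map_map (hπ.prodMap measurable_id) measurable_prodMk_left]
    have hcomp : (Prod.map (fun s : EuclideanSpace ℝ (Fin d) => s j) (id : Y → Y)) ∘ Prod.mk x
        = Prod.mk u := by
      funext y
      simp [Prod.map, hxj]
    rw [hcomp]
  show Measure.map (Prod.mk u) ν = _
  calc Measure.map (Prod.mk u) ν
      = (κ u).bind (fun _ => Measure.map (Prod.mk u) ν) := by
        rw [Measure.bind_const, measure_univ, one_smul]
    _ = (κ u).bind (fun x => Measure.map
          (Prod.map (fun s : EuclideanSpace ℝ (Fin d) => s j) (id : Y → Y)) (M x)) := by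
        unfold Measure.bind
        rw [Measure.map_congr hconst]

/-- The key estimate in the proof of Theorem 2: the multivariate Lévy
integrability integral of the CoRM intensity `ν̃_d` is bounded by `√d` times the
sum of the marginal Lévy integrability integrals. -/
theorem corm_multivariate_integral_le {X : Type*} [MeasurableSpace X]
    (d : ℕ) (hd : 1 ≤ d)
    (ν : Measure (ℝ × X)) (hν_supp : ν {p : ℝ × X | p.1 ≤ 0} = 0)
    (H : Measure (EuclideanSpace ℝ (Fin d))) [IsProbabilityMeasure H]
    (hH_supp : H {s : EuclideanSpace ℝ (Fin d) | ¬ ∀ j, 0 < s j} = 0) :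
    ∫⁻ p in {s : EuclideanSpace ℝ (Fin d) | ∀ j, 0 < s j} ×ˢ (univ : Set X),
        ENNReal.ofReal (min 1 ‖p.1‖)
        ∂(Measure.map
            (fun q : EuclideanSpace ℝ (Fin d) × (ℝ × X) => (q.2.1 • q.1, q.2.2))
            (H.prod ν))
      ≤ ENNReal.ofReal (Real.sqrt d) *
        ∑ j : Fin d,
          ∫⁻ p in (Ioi (0 : ℝ)) ×ˢ (univ : Set X), ENNReal.ofReal (min 1 p.1)
            ∂(Measure.map (fun q : ℝ × (ℝ × X) => (q.1 * q.2.1, q.2.2))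
                ((Measure.map (fun s : EuclideanSpace ℝ (Fin d) => s j) H).prod ν)) := by
  classical
  have hπ : ∀ j : Fin d, Measurable (fun s : EuclideanSpace ℝ (Fin d) => s j) :=
    fun j => (measurable_pi_apply j).comp (WithLp.measurable_ofLp 2 _)
  have hSmeas : MeasurableSet {s : EuclideanSpace ℝ (Fin d) | ∀ j, 0 < s j} := by
    have hset : {s : EuclideanSpace ℝ (Fin d) | ∀ j, 0 < s j}
        = ⋂ j, (fun s : EuclideanSpace ℝ (Fin d) => s j) ⁻¹' Ioi 0 := by
      ext s; simp [Set.mem_iInter]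
    rw [hset]
    exact MeasurableSet.iInter fun j => (hπ j) measurableSet_Ioi
  -- the maps and integrands
  set φ : EuclideanSpace ℝ (Fin d) × (ℝ × X) → EuclideanSpace ℝ (Fin d) × X :=
    fun q => (q.2.1 • q.1, q.2.2) with hφdef
  have hφ : Measurable φ :=
    ((measurable_snd.fst).smul measurable_fst).prodMk measurable_snd.snd
  set ψ : ℝ × (ℝ × X) → ℝ × X := fun q => (q.1 * q.2.1, q.2.2) with hψdef
  have hψ : Measurable ψ :=
    (measurable_fst.mul measurable_snd.fst).prodMk measurable_snd.snd
  have hf₁ : Measurable (fun p : EuclideanSpace ℝ (Fin d) × X =>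
      ENNReal.ofReal (min 1 ‖p.1‖)) :=
    (measurable_const.min measurable_fst.norm).ennreal_ofReal
  have hf₂ : Measurable (fun p : ℝ × X => ENNReal.ofReal (min 1 p.1)) :=
    (measurable_const.min measurable_fst).ennreal_ofReal
  set F₁ : EuclideanSpace ℝ (Fin d) × (ℝ × X) → ℝ≥0∞ :=
    ({s : EuclideanSpace ℝ (Fin d) | ∀ j, 0 < s j} ×ˢ (univ : Set X)).indicator
      (fun p => ENNReal.ofReal (min 1 ‖p.1‖)) ∘ φ with hF₁def
  have hF₁ : Measurable F₁ :=
    (hf₁.indicator (hSmeas.prod MeasurableSet.univ)).comp hφ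
  set F₂ : ℝ × (ℝ × X) → ℝ≥0∞ :=
    ((Ioi (0:ℝ)) ×ˢ (univ : Set X)).indicator
      (fun p => ENNReal.ofReal (min 1 p.1)) ∘ ψ with hF₂def
  have hF₂ : Measurable F₂ :=
    (hf₂.indicator (measurableSet_Ioi.prod MeasurableSet.univ)).comp hψ
  -- rewrite the LHS
  have hL : ∫⁻ p in {s : EuclideanSpace ℝ (Fin d) | ∀ j, 0 < s j} ×ˢ (univ : Set X),
        ENNReal.ofReal (min 1 ‖p.1‖) ∂(Measure.map φ (H.prod ν))
      = ∫⁻ q, F₁ q ∂(H.prod ν) := by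
    rw [← lintegral_indicator (hSmeas.prod MeasurableSet.univ),
      lintegral_map (hf₁.indicator (hSmeas.prod MeasurableSet.univ)) hφ]
    rfl
  by_cases hm1 : AEMeasurable
      (fun s : EuclideanSpace ℝ (Fin d) => Measure.map (Prod.mk s) ν) H
  · -- the main case
    set M := hm1.mk _ with hMdef
    have hM : Measurable M := hm1.measurable_mk
    have hprodbind : H.prod ν = H.bind M := by
      rw [Measure.prod_def]
      unfold Measure.bind
      rw [Measure.map_congr hm1.ae_eq_mk]
    have hm2 : ∀ j : Fin d, AEMeasurable (fun u : ℝ => Measure.map (Prod.mk u) ν)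
        (Measure.map (fun s : EuclideanSpace ℝ (Fin d) => s j) H) :=
      fun j => aemeasurable_marginal_family ν H j hm1
    set M₂ : Fin d → ℝ → Measure (ℝ × (ℝ × X)) := fun j => (hm2 j).mk _ with hM₂def
    set K : Fin d → ℝ → ℝ≥0∞ := fun j u => ∫⁻ q, F₂ q ∂(M₂ j u) with hKdef
    have hK : ∀ j, Measurable (K j) :=
      fun j => (Measure.measurable_lintegral hF₂).comp (hm2 j).measurable_mk
    -- rewrite each RHS summand
    have hR : ∀ j : Fin d,
        ∫⁻ p in (Ioi (0 : ℝ)) ×ˢ (univ : Set X), ENNReal.ofReal (min 1 p.1)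
            ∂(Measure.map ψ
              ((Measure.map (fun s : EuclideanSpace ℝ (Fin d) => s j) H).prod ν))
          = ∫⁻ s, K j (s j) ∂H := by
      intro j
      rw [← lintegral_indicator (measurableSet_Ioi.prod MeasurableSet.univ),
        lintegral_map (hf₂.indicator (measurableSet_Ioi.prod MeasurableSet.univ)) hψ]
      have hb2 : (Measure.map (fun s : EuclideanSpace ℝ (Fin d) => s j) H).prod ν
          = (Measure.map (fun s : EuclideanSpace ℝ (Fin d) => s j) H).bind (M₂ j) := by
        rw [Measure.prod_def]
        unfold Measure.bind
        rw [Measure.map_congr (hm2 j).ae_eq_mk]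
      rw [show (fun q : ℝ × (ℝ × X) =>
            ((Ioi (0:ℝ)) ×ˢ (univ : Set X)).indicator
              (fun p => ENNReal.ofReal (min 1 p.1)) (ψ q)) = F₂ from rfl]
      rw [hb2, Measure.lintegral_bind (hm2 j).measurable_mk.aemeasurable hF₂.aemeasurable]
      show ∫⁻ u, K j u ∂(Measure.map (fun s : EuclideanSpace ℝ (Fin d) => s j) H)
          = ∫⁻ s, K j (s j) ∂H
      exact lintegral_map (hK j) (hπ j)
    -- the central estimate
    have step : ∀ᵐ s ∂H, ∫⁻ q, F₁ q ∂(M s)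
        ≤ ENNReal.ofReal (Real.sqrt d) * ∑ j, K j (s j) := by
      have h1 : ∀ᵐ s ∂H, ∀ j, 0 < s j := by
        rw [ae_iff]
        exact hH_supp
      have h2 : ∀ᵐ s ∂H, M s = Measure.map (Prod.mk s) ν := hm1.ae_eq_mk.symm
      have h3 : ∀ᵐ s ∂H, ∀ j : Fin d,
          K j (s j) = ∫⁻ q, F₂ q ∂(Measure.map (Prod.mk (s j)) ν) := by
        rw [ae_all_iff]
        intro j
        have h4 : ∀ᵐ u ∂(Measure.map (fun s : EuclideanSpace ℝ (Fin d) => s j) H),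
            Measure.map (Prod.mk u) ν = M₂ j u := (hm2 j).ae_eq_mk
        filter_upwards [ae_of_ae_map (hπ j).aemeasurable h4] with s hs
        rw [hKdef]
        simp only
        rw [← hs]
      filter_upwards [h1, h2, h3] with s hs hMs hKs
      rw [hMs, lintegral_map hF₁ measurable_prodMk_left]
      have hb : ∀ᵐ p ∂ν, F₁ (s, p)
          ≤ ENNReal.ofReal (Real.sqrt d) * ∑ j, F₂ (s j, p) := by
        have hνae : ∀ᵐ p ∂ν, 0 < p.1 := by
          rw [ae_iff]
          have : {p : ℝ × X | ¬ 0 < p.1} = {p : ℝ × X | p.1 ≤ 0} := by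
            ext p; simp [not_lt]
          rw [this]
          exact hν_supp
        filter_upwards [hνae] with p hp
        have hmem₁ : φ (s, p) ∈ {s : EuclideanSpace ℝ (Fin d) | ∀ j, 0 < s j} ×ˢ
            (univ : Set X) := by
          refine ⟨fun j => ?_, trivial⟩
          show 0 < (p.1 • s) j
          have : (p.1 • s) j = p.1 * s j := rfl
          rw [this]
          exact mul_pos hp (hs j)
        have hF₁eq : F₁ (s, p) = ENNReal.ofReal (min 1 ‖p.1 • s‖) := by
          rw [hF₁def]
          simp only [Function.comp_apply]
          rw [Set.indicator_of_mem hmem₁]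
        have hF₂eq : ∀ j : Fin d, F₂ (s j, p) = ENNReal.ofReal (min 1 (s j * p.1)) := by
          intro j
          rw [hF₂def]
          simp only [Function.comp_apply]
          have hmem₂ : ψ (s j, p) ∈ (Ioi (0:ℝ)) ×ˢ (univ : Set X) :=
            ⟨mul_pos (hs j) hp, trivial⟩
          rw [Set.indicator_of_mem hmem₂]
        rw [hF₁eq]
        calc ENNReal.ofReal (min 1 ‖p.1 • s‖)
            ≤ ENNReal.ofReal (Real.sqrt d * ∑ j, min 1 (s j * p.1)) :=
              ENNReal.ofReal_le_ofReal (key_real hd s hs hp)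
          _ = ENNReal.ofReal (Real.sqrt d) * ENNReal.ofReal (∑ j, min 1 (s j * p.1)) :=
              ENNReal.ofReal_mul (Real.sqrt_nonneg _)
          _ = ENNReal.ofReal (Real.sqrt d) * ∑ j, ENNReal.ofReal (min 1 (s j * p.1)) := by
              rw [ENNReal.ofReal_sum_of_nonneg
                (fun j _ => le_min zero_le_one (mul_pos (hs j) hp).le)]
          _ = ENNReal.ofReal (Real.sqrt d) * ∑ j, F₂ (s j, p) := by
              congr 1
              exact (Finset.sum_congr rfl fun j _ => (hF₂eq j).symm)
      calc ∫⁻ p, F₁ (s, p) ∂ν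
          ≤ ∫⁻ p, ENNReal.ofReal (Real.sqrt d) * ∑ j, F₂ (s j, p) ∂ν :=
            lintegral_mono_ae hb
        _ = ENNReal.ofReal (Real.sqrt d) * ∑ j, ∫⁻ p, F₂ (s j, p) ∂ν := by
            have hmj : ∀ j : Fin d, Measurable (fun p : ℝ × X => F₂ (s j, p)) :=
              fun j => hF₂.comp measurable_prodMk_left
            have hsum : Measurable (fun p : ℝ × X => ∑ j, F₂ (s j, p)) :=
              Finset.measurable_sum _ fun j _ => hmj j
            rw [lintegral_const_mul _ hsum]
            congr 1
            exact lintegral_finset_sum (f := fun j (p : ℝ × X) => F₂ (s j, p)) _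
              (fun j _ => hmj j)
        _ = ENNReal.ofReal (Real.sqrt d) * ∑ j, K j (s j) := by
            congr 1
            refine Finset.sum_congr rfl fun j _ => ?_
            rw [hKs j, lintegral_map hF₂ measurable_prodMk_left]
    -- put everything together
    calc ∫⁻ p in {s : EuclideanSpace ℝ (Fin d) | ∀ j, 0 < s j} ×ˢ (univ : Set X),
          ENNReal.ofReal (min 1 ‖p.1‖) ∂(Measure.map φ (H.prod ν))
        = ∫⁻ q, F₁ q ∂(H.prod ν) := hL
      _ = ∫⁻ s, ∫⁻ q, F₁ q ∂(M s) ∂H := by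
          rw [hprodbind, Measure.lintegral_bind hM.aemeasurable hF₁.aemeasurable]
      _ ≤ ∫⁻ s, ENNReal.ofReal (Real.sqrt d) * ∑ j, K j (s j) ∂H :=
          lintegral_mono_ae step
      _ = ENNReal.ofReal (Real.sqrt d) * ∑ j, ∫⁻ s, K j (s j) ∂H := by
          have hmj : ∀ j : Fin d,
              Measurable (fun s : EuclideanSpace ℝ (Fin d) => K j (s j)) :=
            fun j => (hK j).comp (hπ j)
          have hsum : Measurable
              (fun s : EuclideanSpace ℝ (Fin d) => ∑ j, K j (s j)) :=
            Finset.measurable_sum _ fun j _ => hmj j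
          rw [lintegral_const_mul _ hsum]
          congr 1
          exact lintegral_finset_sum
            (f := fun j (s : EuclideanSpace ℝ (Fin d)) => K j (s j)) _
            (fun j _ => hmj j)
      _ = ENNReal.ofReal (Real.sqrt d) *
          ∑ j : Fin d,
            ∫⁻ p in (Ioi (0 : ℝ)) ×ˢ (univ : Set X), ENNReal.ofReal (min 1 p.1)
              ∂(Measure.map ψ
                ((Measure.map (fun s : EuclideanSpace ℝ (Fin d) => s j) H).prod ν)) := by
          congr 1
          exact Finset.sum_congr rfl fun j _ => (hR j).symm
  · -- degenerate case: the product measure is zero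
    have hzero : H.prod ν = 0 := by
      rw [Measure.prod_def]
      show Measure.join _ = 0
      rw [Measure.map_of_not_aemeasurable hm1, Measure.join_zero]
    rw [hL, hzero]
    simp
end

section
/- Let ρ* be a Borel measure on (0,∞) with ∫ min{1,z} dρ*(z) < ∞ and tail integral U*(y) = ρ*((y,∞)). Assume U*(y) = L(1/y) · y^{-σ} for all y > 0, where σ ∈ [0,1) and L : (0,∞) → (0,∞) is measurable and slowly varying, i.e. for every a > 0, L(at)/L(t) → 1 as t → ∞. Let H be a Borel probability measure on (0,∞) and define U_H(y) = ∫_{(0,∞)} U*(y/s) dH(s). Assume U_H(y) < ∞ for all y > 0 and U_H(y) → ∞ as y → 0⁺. Then the function l(t) := ∫_{(0,∞)} L(t·s) s^σ dH(s) is slowly varying (for every a > 0, l(at)/l(t) → 1 as t → ∞) and U_H(y) = l(1/y) · y^{-σ} for all y > 0; in particular U_H is a regularly varying tail integral of index σ. -/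
open MeasureTheory Filter Set
open scoped ENNReal

lemma corm_aux_V (ρ : Measure ℝ) (σ : ℝ) (L : ℝ → ℝ)
    (hU : ∀ y > (0 : ℝ), ρ (Ioi y) = ENNReal.ofReal (L (1 / y) * y ^ (-σ)))
    {u : ℝ} (hu : 0 < u) :
    ρ (Ioi (1 / u)) = ENNReal.ofReal (L u * u ^ σ) := by
  rw [hU (1 / u) (by positivity), one_div_one_div]
  congr 1
  rw [one_div, Real.inv_rpow hu.le, Real.rpow_neg hu.le, inv_inv]

lemma corm_part2 (ρ : Measure ℝ) (σ : ℝ)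
    (L : ℝ → ℝ) (hL_meas : Measurable L) (hL_pos : ∀ x > (0 : ℝ), 0 < L x)
    (hU : ∀ y > (0 : ℝ), ρ (Ioi y) = ENNReal.ofReal (L (1 / y) * y ^ (-σ)))
    (H : Measure ℝ) [IsProbabilityMeasure H]
    (hUH_fin : ∀ y > (0 : ℝ), ∫⁻ s in Ioi (0 : ℝ), ρ (Ioi (y / s)) ∂H < ⊤) :
    ∀ y > (0 : ℝ), ∫⁻ s in Ioi (0 : ℝ), ρ (Ioi (y / s)) ∂H
        = ENNReal.ofReal ((∫ s in Ioi (0 : ℝ), L (s / y) * s ^ σ ∂H) * y ^ (-σ)) := by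
  intro y hy
  have hpt : ∀ s ∈ Ioi (0 : ℝ), ρ (Ioi (y / s))
      = ENNReal.ofReal (L (s / y) * s ^ σ) * ENNReal.ofReal (y ^ (-σ)) := by
    intro s hs
    have hs0 : (0 : ℝ) < s := hs
    have h1 : y / s = 1 / (s / y) := by field_simp
    have h2 : ρ (Ioi (y / s)) = ENNReal.ofReal (L (s / y) * (s / y) ^ σ) := by
      rw [h1]; exact corm_aux_V ρ σ L hU (by positivity)
    have hLp := (hL_pos (s / y) (by positivity)).le
    rw [h2, ← ENNReal.ofReal_mul (by positivity)]
    congr 1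
    rw [Real.div_rpow hs0.le hy.le, Real.rpow_neg hy.le, div_eq_mul_inv]
    ring
  have hcong : ∫⁻ s in Ioi (0 : ℝ), ρ (Ioi (y / s)) ∂H
      = ∫⁻ s in Ioi (0 : ℝ), ENNReal.ofReal (L (s / y) * s ^ σ) * ENNReal.ofReal (y ^ (-σ)) ∂H :=
    setLIntegral_congr_fun measurableSet_Ioi (fun s hs => hpt s hs)
  have hy' : ENNReal.ofReal (y ^ (-σ)) ≠ 0 := by
    simp only [ne_eq, ENNReal.ofReal_eq_zero, not_le]
    positivity
  rw [hcong, lintegral_mul_const' _ _ ENNReal.ofReal_ne_top]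
  have hfin : ∫⁻ s in Ioi (0 : ℝ), ENNReal.ofReal (L (s / y) * s ^ σ) ∂H < ⊤ := by
    have h := hUH_fin y hy
    rw [hcong, lintegral_mul_const' _ _ ENNReal.ofReal_ne_top] at h
    by_contra hA
    push_neg at hA
    rw [top_le_iff.mp hA, ENNReal.top_mul hy'] at h
    exact absurd h (lt_irrefl _)
  have hnn : 0 ≤ᶠ[ae (H.restrict (Ioi 0))] fun s => L (s / y) * s ^ σ := by
    filter_upwards [ae_restrict_mem measurableSet_Ioi] with s hs
    have hs0 : (0:ℝ) < s := hs
    have := hL_pos (s / y) (by positivity)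
    positivity
  have hint : Integrable (fun s => L (s / y) * s ^ σ) (H.restrict (Ioi 0)) := by
    refine ⟨(Measurable.aestronglyMeasurable (by fun_prop)), ?_⟩
    rw [hasFiniteIntegral_iff_ofReal hnn]
    exact hfin
  rw [← ofReal_integral_eq_lintegral_ofReal hint hnn,
    ← ENNReal.ofReal_mul (integral_nonneg_of_ae hnn)]

noncomputable def cormW (ρ H : Measure ℝ) (t : ℝ) : ℝ≥0∞ :=
  ∫⁻ s in Ioi (0 : ℝ), ρ (Ioi (1 / t / s)) ∂H
lemma cormW_def (ρ H : Measure ℝ) (t : ℝ) :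
    cormW ρ H t = ∫⁻ s in Ioi (0 : ℝ), ρ (Ioi (1 / t / s)) ∂H := rfl

lemma corm_squeeze (ρ : Measure ℝ) (σ : ℝ)
    (L : ℝ → ℝ) (hL_pos : ∀ x > (0 : ℝ), 0 < L x)
    (hL_slow : ∀ a > (0 : ℝ), Tendsto (fun t => L (a * t) / L t) atTop (nhds 1))
    (hU : ∀ y > (0 : ℝ), ρ (Ioi y) = ENNReal.ofReal (L (1 / y) * y ^ (-σ)))
    (H : Measure ℝ) [IsProbabilityMeasure H]
    (hUH_fin : ∀ y > (0 : ℝ), ∫⁻ s in Ioi (0 : ℝ), ρ (Ioi (y / s)) ∂H < ⊤)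
    (hUH_inf : Tendsto (fun y : ℝ => ∫⁻ s in Ioi (0 : ℝ), ρ (Ioi (y / s)) ∂H)
      (nhdsWithin 0 (Ioi 0)) (nhds ⊤))
    (a : ℝ) (ha : 1 ≤ a) :
    Tendsto (fun t => (cormW ρ H (a * t)).toReal / (cormW ρ H t).toReal)
      atTop (nhds (a ^ σ)) := by
  have ha0 : (0:ℝ) < a := lt_of_lt_of_le one_pos ha
  have hAσ : (0:ℝ) < a ^ σ := Real.rpow_pos_of_pos ha0 σ
  have hVfin : ∀ u : ℝ, 0 < u → ρ (Ioi (1 / u)) ≠ ⊤ := fun u hu => by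
    rw [corm_aux_V ρ σ L hU hu]; exact ENNReal.ofReal_ne_top
  have hWfin : ∀ t : ℝ, 0 < t → cormW ρ H t ≠ ⊤ := fun t ht =>
    (hUH_fin (1 / t) (by positivity)).ne
  -- w → ∞
  have w_top : Tendsto (fun t => (cormW ρ H t).toReal) atTop atTop := by
    have h1 : Tendsto (fun t : ℝ => 1 / t) atTop (nhdsWithin 0 (Ioi 0)) := by
      apply tendsto_nhdsWithin_of_tendsto_nhds_of_eventually_within
      · simpa [one_div] using tendsto_inv_atTop_zero
      · filter_upwards [eventually_gt_atTop 0] with t ht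
        exact mem_Ioi.mpr (by positivity)
    have hWtop : Tendsto (fun t => cormW ρ H t) atTop (nhds ⊤) := hUH_inf.comp h1
    rw [tendsto_atTop]
    intro M
    have hev := hWtop.eventually (Ioi_mem_nhds (ENNReal.ofReal_lt_top (r := M)))
    filter_upwards [hev, eventually_gt_atTop 0] with t h1 h2
    have hM : M ≤ (ENNReal.ofReal M).toReal := by
      rcases le_total M 0 with h | h
      · simpa [ENNReal.ofReal_eq_zero.mpr h] using h
      · rw [ENNReal.toReal_ofReal h]
    exact hM.trans (ENNReal.toReal_mono (hWfin t h2) (le_of_lt h1))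
  -- key epsilon bounds
  have key : ∀ ε : ℝ, 0 < ε → ε < 1 → ∃ K : ℝ, 0 ≤ K ∧ ∀ t : ℝ, 0 < t →
      ((cormW ρ H (a * t)).toReal ≤ (1 + ε) * a ^ σ * (cormW ρ H t).toReal + K ∧
       (1 - ε) * a ^ σ * (cormW ρ H t).toReal ≤ (cormW ρ H (a * t)).toReal + (1 - ε) * a ^ σ * K) := by
    intro ε hε0 hε1
    have hev : ∀ᶠ u in atTop, |L (a * u) / L u - 1| < ε := by
      have := Metric.tendsto_nhds.mp (hL_slow a ha0) ε hε0
      simpa [Real.dist_eq] using this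
    rw [eventually_atTop] at hev
    obtain ⟨T₀, hT₀⟩ := hev
    set T := max T₀ 1 with hT
    have hTpos : (0:ℝ) < T := lt_of_lt_of_le one_pos (le_max_right _ _)
    have hC : ∀ u : ℝ, T ≤ u →
        L (a * u) * (a * u) ^ σ ≤ ((1 + ε) * a ^ σ) * (L u * u ^ σ) ∧
        ((1 - ε) * a ^ σ) * (L u * u ^ σ) ≤ L (a * u) * (a * u) ^ σ := by
      intro u hu
      have hu0 : (0:ℝ) < u := lt_of_lt_of_le hTpos hu
      have hLu := hL_pos u hu0
      have habs := abs_lt.mp (hT₀ u (le_trans (le_max_left _ _) hu))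
      have hup : L (a * u) ≤ (1 + ε) * L u :=
        le_of_lt ((div_lt_iff₀ hLu).mp (by linarith [habs.2]))
      have hlo : (1 - ε) * L u ≤ L (a * u) :=
        le_of_lt ((lt_div_iff₀ hLu).mp (by linarith [habs.1]))
      have hrw : (a * u) ^ σ = a ^ σ * u ^ σ := Real.mul_rpow ha0.le hu0.le
      have huσ : (0:ℝ) < u ^ σ := Real.rpow_pos_of_pos hu0 σ
      constructor
      · rw [hrw]
        nlinarith [mul_le_mul_of_nonneg_right hup (le_of_lt (mul_pos hAσ huσ))]
      · rw [hrw]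
        nlinarith [mul_le_mul_of_nonneg_right hlo (le_of_lt (mul_pos hAσ huσ))]
    have hKfin : ρ (Ioi (1 / (a * T))) ≠ ⊤ := hVfin _ (by positivity)
    refine ⟨(ρ (Ioi (1 / (a * T)))).toReal, ENNReal.toReal_nonneg, ?_⟩
    intro t ht
    have hAs : MeasurableSet (Ici (T / t)) := measurableSet_Ici
    have haepos : ∀ᵐ s ∂(H.restrict (Ioi (0:ℝ))), s ∈ Ioi (0:ℝ) :=
      ae_restrict_mem measurableSet_Ioi
    have hcubne : ENNReal.ofReal ((1 + ε) * a ^ σ) ≠ ⊤ := ENNReal.ofReal_ne_top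
    have hclbne : ENNReal.ofReal ((1 - ε) * a ^ σ) ≠ ⊤ := ENNReal.ofReal_ne_top
    -- upper bound on A
    have hup_A : ∫⁻ s in Ici (T / t), ρ (Ioi (1 / (a * t) / s)) ∂(H.restrict (Ioi 0))
        ≤ ENNReal.ofReal ((1 + ε) * a ^ σ) * cormW ρ H t := by
      calc ∫⁻ s in Ici (T / t), ρ (Ioi (1 / (a * t) / s)) ∂(H.restrict (Ioi 0))
          ≤ ∫⁻ s in Ici (T / t),
              ENNReal.ofReal ((1 + ε) * a ^ σ) * ρ (Ioi (1 / t / s)) ∂(H.restrict (Ioi 0)) := by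
            apply lintegral_mono_ae
            filter_upwards [ae_restrict_mem hAs, ae_restrict_of_ae haepos] with s hsA hs0
            have hs0' : (0:ℝ) < s := hs0
            have hts : T ≤ t * s := by
              rw [mul_comm]; exact (div_le_iff₀ ht).mp hsA
            have hts0 : 0 < t * s := lt_of_lt_of_le hTpos hts
            have e1 : 1 / (a * t) / s = 1 / (a * (t * s)) := by rw [div_div, mul_assoc]
            have e2 : 1 / t / s = 1 / (t * s) := div_div 1 t s
            rw [e1, e2, corm_aux_V ρ σ L hU (mul_pos ha0 hts0), corm_aux_V ρ σ L hU hts0,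
              ← ENNReal.ofReal_mul (by positivity)]
            exact ENNReal.ofReal_le_ofReal (hC (t * s) hts).1
        _ = ENNReal.ofReal ((1 + ε) * a ^ σ) *
              ∫⁻ s in Ici (T / t), ρ (Ioi (1 / t / s)) ∂(H.restrict (Ioi 0)) :=
            lintegral_const_mul' _ _ hcubne
        _ ≤ ENNReal.ofReal ((1 + ε) * a ^ σ) * cormW ρ H t :=
            mul_le_mul_right (lintegral_mono' Measure.restrict_le_self (le_refl _)) _
    -- upper bound on Aᶜ
    have hup_Ac : ∫⁻ s in (Ici (T / t))ᶜ, ρ (Ioi (1 / (a * t) / s)) ∂(H.restrict (Ioi 0))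
        ≤ ρ (Ioi (1 / (a * T))) := by
      calc ∫⁻ s in (Ici (T / t))ᶜ, ρ (Ioi (1 / (a * t) / s)) ∂(H.restrict (Ioi 0))
          ≤ ∫⁻ _s in (Ici (T / t))ᶜ, ρ (Ioi (1 / (a * T))) ∂(H.restrict (Ioi 0)) := by
            apply lintegral_mono_ae
            filter_upwards [ae_restrict_mem hAs.compl, ae_restrict_of_ae haepos] with s hsA hs0
            have hs0' : (0:ℝ) < s := hs0
            have hst : s < T / t := not_le.mp hsA
            have hts : t * s < T := by rw [mul_comm]; exact (lt_div_iff₀ ht).mp hst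
            have hts0 : 0 < t * s := mul_pos ht hs0'
            have e1 : 1 / (a * t) / s = 1 / (a * (t * s)) := by rw [div_div, mul_assoc]
            rw [e1]
            apply measure_mono
            apply Ioi_subset_Ioi
            apply one_div_le_one_div_of_le (mul_pos ha0 hts0)
            exact mul_le_mul_of_nonneg_left hts.le ha0.le
        _ = ρ (Ioi (1 / (a * T))) * (H.restrict (Ioi 0)) ((Ici (T / t))ᶜ) :=
            setLIntegral_const _ _
        _ ≤ ρ (Ioi (1 / (a * T))) * 1 := by
            apply mul_le_mul_right
            rw [Measure.restrict_apply hAs.compl]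
            exact prob_le_one
        _ = ρ (Ioi (1 / (a * T))) := mul_one _
    have hupper : cormW ρ H (a * t) ≤
        ENNReal.ofReal ((1 + ε) * a ^ σ) * cormW ρ H t + ρ (Ioi (1 / (a * T))) := by
      calc cormW ρ H (a * t)
          = ∫⁻ s in Ici (T / t), ρ (Ioi (1 / (a * t) / s)) ∂(H.restrict (Ioi 0)) +
            ∫⁻ s in (Ici (T / t))ᶜ, ρ (Ioi (1 / (a * t) / s)) ∂(H.restrict (Ioi 0)) :=
            (lintegral_add_compl _ hAs).symm
        _ ≤ _ := add_le_add hup_A hup_Ac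
    -- lower bound pieces
    have hlo_A : ENNReal.ofReal ((1 - ε) * a ^ σ) *
        ∫⁻ s in Ici (T / t), ρ (Ioi (1 / t / s)) ∂(H.restrict (Ioi 0))
        ≤ ∫⁻ s in Ici (T / t), ρ (Ioi (1 / (a * t) / s)) ∂(H.restrict (Ioi 0)) := by
      rw [← lintegral_const_mul' _ _ hclbne]
      apply lintegral_mono_ae
      filter_upwards [ae_restrict_mem hAs, ae_restrict_of_ae haepos] with s hsA hs0
      have hs0' : (0:ℝ) < s := hs0
      have hts : T ≤ t * s := by rw [mul_comm]; exact (div_le_iff₀ ht).mp hsA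
      have hts0 : 0 < t * s := lt_of_lt_of_le hTpos hts
      have e1 : 1 / (a * t) / s = 1 / (a * (t * s)) := by rw [div_div, mul_assoc]
      have e2 : 1 / t / s = 1 / (t * s) := div_div 1 t s
      rw [e1, e2, corm_aux_V ρ σ L hU (mul_pos ha0 hts0), corm_aux_V ρ σ L hU hts0,
        ← ENNReal.ofReal_mul (by nlinarith)]
      exact ENNReal.ofReal_le_ofReal (hC (t * s) hts).2
    have hlo_Ac : ∫⁻ s in (Ici (T / t))ᶜ, ρ (Ioi (1 / t / s)) ∂(H.restrict (Ioi 0))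
        ≤ ρ (Ioi (1 / (a * T))) := by
      calc ∫⁻ s in (Ici (T / t))ᶜ, ρ (Ioi (1 / t / s)) ∂(H.restrict (Ioi 0))
          ≤ ∫⁻ _s in (Ici (T / t))ᶜ, ρ (Ioi (1 / (a * T))) ∂(H.restrict (Ioi 0)) := by
            apply lintegral_mono_ae
            filter_upwards [ae_restrict_mem hAs.compl, ae_restrict_of_ae haepos] with s hsA hs0
            have hs0' : (0:ℝ) < s := hs0
            have hst : s < T / t := not_le.mp hsA
            have hts : t * s < T := by rw [mul_comm]; exact (lt_div_iff₀ ht).mp hst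
            have hts0 : 0 < t * s := mul_pos ht hs0'
            have e2 : 1 / t / s = 1 / (t * s) := div_div 1 t s
            rw [e2]
            apply measure_mono
            apply Ioi_subset_Ioi
            apply one_div_le_one_div_of_le hts0
            exact hts.le.trans (le_mul_of_one_le_left hTpos.le ha)
        _ = ρ (Ioi (1 / (a * T))) * (H.restrict (Ioi 0)) ((Ici (T / t))ᶜ) :=
            setLIntegral_const _ _
        _ ≤ ρ (Ioi (1 / (a * T))) * 1 := by
            apply mul_le_mul_right
            rw [Measure.restrict_apply hAs.compl]
            exact prob_le_one
        _ = ρ (Ioi (1 / (a * T))) := mul_one _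
    have hlower : ENNReal.ofReal ((1 - ε) * a ^ σ) * cormW ρ H t ≤
        cormW ρ H (a * t) + ENNReal.ofReal ((1 - ε) * a ^ σ) * ρ (Ioi (1 / (a * T))) := by
      have hsplit : cormW ρ H t
          = ∫⁻ s in Ici (T / t), ρ (Ioi (1 / t / s)) ∂(H.restrict (Ioi 0)) +
            ∫⁻ s in (Ici (T / t))ᶜ, ρ (Ioi (1 / t / s)) ∂(H.restrict (Ioi 0)) :=
        (lintegral_add_compl _ hAs).symm
      calc ENNReal.ofReal ((1 - ε) * a ^ σ) * cormW ρ H t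
          ≤ ENNReal.ofReal ((1 - ε) * a ^ σ) *
              ((∫⁻ s in Ici (T / t), ρ (Ioi (1 / t / s)) ∂(H.restrict (Ioi 0))) +
                ρ (Ioi (1 / (a * T)))) := by
            apply mul_le_mul_right
            rw [hsplit]
            exact add_le_add_right hlo_Ac _
        _ = ENNReal.ofReal ((1 - ε) * a ^ σ) *
              (∫⁻ s in Ici (T / t), ρ (Ioi (1 / t / s)) ∂(H.restrict (Ioi 0))) +
            ENNReal.ofReal ((1 - ε) * a ^ σ) * ρ (Ioi (1 / (a * T))) := mul_add _ _ _
        _ ≤ cormW ρ H (a * t) + ENNReal.ofReal ((1 - ε) * a ^ σ) * ρ (Ioi (1 / (a * T))) := by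
            apply add_le_add_left
            exact hlo_A.trans (lintegral_mono' Measure.restrict_le_self (le_refl _))
    -- convert to reals
    have hWt := hWfin t ht
    have hWat := hWfin (a * t) (mul_pos ha0 ht)
    have hcubσ : (0:ℝ) ≤ (1 + ε) * a ^ σ := by nlinarith
    have hclbσ : (0:ℝ) ≤ (1 - ε) * a ^ σ := by nlinarith
    constructor
    · have h := ENNReal.toReal_mono
        (ENNReal.add_ne_top.mpr ⟨ENNReal.mul_ne_top hcubne hWt, hKfin⟩) hupper
      rwa [ENNReal.toReal_add (ENNReal.mul_ne_top hcubne hWt) hKfin, ENNReal.toReal_mul,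
        ENNReal.toReal_ofReal hcubσ] at h
    · have h := ENNReal.toReal_mono
        (ENNReal.add_ne_top.mpr ⟨hWat, ENNReal.mul_ne_top hclbne hKfin⟩) hlower
      rwa [ENNReal.toReal_add hWat (ENNReal.mul_ne_top hclbne hKfin), ENNReal.toReal_mul,
        ENNReal.toReal_mul, ENNReal.toReal_ofReal hclbσ] at h
  -- final limit
  rw [Metric.tendsto_nhds]
  intro δ hδ
  set ε := min (1/2 : ℝ) (δ / (2 * (a ^ σ + 1))) with hεdef
  have hε0 : 0 < ε := lt_min (by norm_num) (by positivity)
  have hε1 : ε < 1 := lt_of_le_of_lt (min_le_left _ _) (by norm_num)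
  have hε2 : 2 * (a ^ σ + 1) * ε ≤ δ := by
    have h := min_le_right (1/2 : ℝ) (δ / (2 * (a ^ σ + 1)))
    rw [le_div_iff₀ (by positivity)] at h
    calc 2 * (a ^ σ + 1) * ε = ε * (2 * (a ^ σ + 1)) := by ring
      _ ≤ δ := h
  obtain ⟨K, hK0, hbound⟩ := key ε hε0 hε1
  have e1 : ε * a ^ σ < δ / 2 := by nlinarith
  filter_upwards [eventually_gt_atTop 0, w_top.eventually_ge_atTop 1,
    w_top.eventually_ge_atTop (2 * (a ^ σ + 1) * K / δ)] with t ht hw1 hwK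
  have hw0 : (0:ℝ) < (cormW ρ H t).toReal := lt_of_lt_of_le one_pos hw1
  obtain ⟨hub, hlb⟩ := hbound t ht
  have hwK' : 2 * (a ^ σ + 1) * K ≤ δ * (cormW ρ H t).toReal := by
    have := (div_le_iff₀ hδ).mp hwK
    linarith
  rw [Real.dist_eq, abs_sub_lt_iff]
  constructor
  · rw [sub_lt_iff_lt_add, div_lt_iff₀ hw0]
    nlinarith [mul_lt_mul_of_pos_right e1 hw0, mul_nonneg hAσ.le hK0]
  · rw [sub_lt_comm, lt_div_iff₀ hw0]
    nlinarith [mul_lt_mul_of_pos_right e1 hw0, mul_nonneg hAσ.le hK0, mul_nonneg (mul_nonneg hε0.le hAσ.le) hK0]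

/-- **Theorem 3**: if the directing Lévy measure `ρ*` is regularly varying of
index `σ ∈ [0,1)`, with tail integral `U*(y) = L(1/y)·y^{-σ}` for a slowly
varying `L`, and the CoRM marginal tail integral `U_H(y) = ∫ U*(y/s) dH(s)` is
finite for all `y > 0` and tends to `∞` as `y → 0⁺`, then
`l(t) = ∫ L(t·s) s^σ dH(s)` is slowly varying and `U_H(y) = l(1/y)·y^{-σ}`,
i.e. `U_H` is a regularly varying tail integral of index `σ`. -/
theorem corm_marginal_regularly_varying
    (ρ : Measure ℝ) (hρ_supp : ρ {z : ℝ | z ≤ 0} = 0)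
    (hρ_levy : ∫⁻ z in Ioi (0 : ℝ), ENNReal.ofReal (min 1 z) ∂ρ < ⊤)
    (σ : ℝ) (hσ0 : 0 ≤ σ) (hσ1 : σ < 1)
    (L : ℝ → ℝ) (hL_meas : Measurable L) (hL_pos : ∀ x > (0 : ℝ), 0 < L x)
    (hL_slow : ∀ a > (0 : ℝ), Tendsto (fun t => L (a * t) / L t) atTop (nhds 1))
    (hU : ∀ y > (0 : ℝ), ρ (Ioi y) = ENNReal.ofReal (L (1 / y) * y ^ (-σ)))
    (H : Measure ℝ) [IsProbabilityMeasure H] (hH_supp : H (Iic (0 : ℝ)) = 0)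
    (hUH_fin : ∀ y > (0 : ℝ), ∫⁻ s in Ioi (0 : ℝ), ρ (Ioi (y / s)) ∂H < ⊤)
    (hUH_inf : Tendsto (fun y : ℝ => ∫⁻ s in Ioi (0 : ℝ), ρ (Ioi (y / s)) ∂H)
      (nhdsWithin 0 (Ioi 0)) (nhds ⊤)) :
    (∀ a > (0 : ℝ), Tendsto
      (fun t => (∫ s in Ioi (0 : ℝ), L (a * t * s) * s ^ σ ∂H) /
                (∫ s in Ioi (0 : ℝ), L (t * s) * s ^ σ ∂H)) atTop (nhds 1)) ∧
    (∀ y > (0 : ℝ), ∫⁻ s in Ioi (0 : ℝ), ρ (Ioi (y / s)) ∂H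
        = ENNReal.ofReal ((∫ s in Ioi (0 : ℝ), L (s / y) * s ^ σ ∂H) * y ^ (-σ))) := by
  have lrep : ∀ t : ℝ, 0 < t → ∫ s in Ioi (0 : ℝ), L (t * s) * s ^ σ ∂H
      = (cormW ρ H t).toReal * t ^ (-σ) := by
    intro t ht
    have h2 := corm_part2 ρ σ L hL_meas hL_pos hU H hUH_fin (1 / t) (by positivity)
    have hI : (fun s : ℝ => L (s / (1 / t)) * s ^ σ) = fun s : ℝ => L (t * s) * s ^ σ := by
      funext s
      rw [one_div, div_inv_eq_mul, mul_comm s t]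
    rw [hI] at h2
    have hpow : (1 / t : ℝ) ^ (-σ) = t ^ σ := by
      rw [one_div, Real.inv_rpow ht.le, Real.rpow_neg ht.le, inv_inv]
    rw [hpow] at h2
    have Jnn : 0 ≤ ∫ s in Ioi (0 : ℝ), L (t * s) * s ^ σ ∂H := by
      apply integral_nonneg_of_ae
      filter_upwards [ae_restrict_mem measurableSet_Ioi] with s hs
      have hs0 : (0:ℝ) < s := hs
      have := hL_pos (t * s) (mul_pos ht hs0)
      positivity
    have htσ : (0:ℝ) < t ^ σ := Real.rpow_pos_of_pos ht σ
    have hw : (cormW ρ H t).toReal = (∫ s in Ioi (0 : ℝ), L (t * s) * s ^ σ ∂H) * t ^ σ := by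
      rw [cormW_def, h2, ENNReal.toReal_ofReal (mul_nonneg Jnn htσ.le)]
    rw [Real.rpow_neg ht.le, hw, mul_assoc, mul_inv_cancel₀ (ne_of_gt htσ), mul_one]
  constructor
  · intro a ha0
    have hAσ : (0:ℝ) < a ^ σ := Real.rpow_pos_of_pos ha0 σ
    have hratio : Tendsto (fun t => (cormW ρ H (a * t)).toReal / (cormW ρ H t).toReal)
        atTop (nhds (a ^ σ)) := by
      rcases le_or_gt 1 a with h | h
      · exact corm_squeeze ρ σ L hL_pos hL_slow hU H hUH_fin hUH_inf a h
      · have hb : (1:ℝ) ≤ 1 / a := by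
          rw [le_div_iff₀ ha0]; linarith
        have hsq := corm_squeeze ρ σ L hL_pos hL_slow hU H hUH_fin hUH_inf (1 / a) hb
        have hmul : Tendsto (fun t : ℝ => a * t) atTop atTop :=
          Tendsto.const_mul_atTop ha0 tendsto_id
        have hinv := (hsq.comp hmul).inv₀ (ne_of_gt (Real.rpow_pos_of_pos (by positivity) σ))
        simp only [Function.comp] at hinv
        have hval : (((1:ℝ) / a) ^ σ)⁻¹ = a ^ σ := by
          rw [one_div, Real.inv_rpow ha0.le, inv_inv]
        rw [← hval]
        apply hinv.congr
        intro t
        have hcanc : (1 / a) * (a * t) = t := by field_simp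
        rw [hcanc, inv_div]
    have hfinal := hratio.mul_const (a ^ (-σ))
    have hone : a ^ σ * a ^ (-σ) = 1 := by
      rw [← Real.rpow_add ha0]; norm_num
    rw [hone] at hfinal
    apply hfinal.congr'
    filter_upwards [eventually_gt_atTop 0] with t ht
    have hat : 0 < a * t := mul_pos ha0 ht
    rw [lrep t ht, lrep (a * t) hat]
    rcases eq_or_ne ((cormW ρ H t).toReal) 0 with h0 | h0
    · rw [h0]; simp
    · have htσ : t ^ (-σ) ≠ 0 := ne_of_gt (Real.rpow_pos_of_pos ht _)
      rw [Real.mul_rpow ha0.le ht.le]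
      field_simp
  · exact corm_part2 ρ σ L hL_meas hL_pos hU H hUH_fin
end

section
/- Let ρ* be a Borel measure on (0,∞) with ∫ min{1,z} dρ*(z) < ∞, and for s > 0 define f(s) = ∫_{(0,∞)} z^{-1} e^{-s/z} dρ*(z). Then f is infinitely differentiable on (0,∞) and for every integer k ≥ 0 and every s > 0, (-1)^k f^{(k)}(s) = ∫_{(0,∞)} z^{-(k+1)} e^{-s/z} dρ*(z). In particular, for d ≥ 1 and s₁,…,s_d > 0, the d-variate density ρ̃_d(s₁,…,s_d) = ∫_{(0,∞)} z^{-d} e^{-(s₁+⋯+s_d)/z} dρ*(z) of the CoRM with independent standard exponential scores satisfies ρ̃_d(s₁,…,s_d) = (-1)^{d-1} f^{(d-1)}(s₁+⋯+s_d). -/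
open MeasureTheory Filter Set

/-- Key pointwise bound: `z^{-(n+1)} e^{-c/z} ≤ C(n,c) · min 1 z` on `(0,∞)`. -/
lemma corm_aux_bound (n : ℕ) {c z : ℝ} (hc : 0 < c) (hz : 0 < z) :
    (z ^ (n + 1))⁻¹ * Real.exp (-c / z) ≤
      max 1 ((n + 2).factorial / c ^ (n + 2)) * min 1 z := by
  rcases le_or_gt 1 z with h1 | h1
  · have hmin : min 1 z = 1 := min_eq_left h1
    have h2 : (z ^ (n + 1))⁻¹ ≤ 1 := by
      rw [inv_le_one_iff₀]
      exact Or.inr (one_le_pow₀ h1)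
    have h3 : Real.exp (-c / z) ≤ 1 := by
      apply Real.exp_le_one_iff.2
      have : 0 ≤ c / z := by positivity
      simp [neg_div]
      linarith
    have : (z ^ (n + 1))⁻¹ * Real.exp (-c / z) ≤ 1 := by
      have hpos : 0 ≤ (z ^ (n + 1))⁻¹ := by positivity
      calc (z ^ (n + 1))⁻¹ * Real.exp (-c / z) ≤ 1 * 1 :=
            mul_le_mul h2 h3 (Real.exp_pos _).le zero_le_one
        _ = 1 := by ring
    rw [hmin, mul_one]
    exact this.trans (le_max_left _ _)
  · have hmin : min 1 z = z := min_eq_right h1.le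
    have hzc : 0 < c / z := by positivity
    have hkey : Real.exp (-c / z) ≤ (n + 2).factorial * (z / c) ^ (n + 2) := by
      have h := Real.pow_div_factorial_le_exp (x := c / z) hzc.le (n + 2)
      have hfac : (0 : ℝ) < (n + 2).factorial := by positivity
      have hlhs : (0 : ℝ) < (c / z) ^ (n + 2) / (n + 2).factorial := by positivity
      have h2 : (Real.exp (c / z))⁻¹ ≤ ((c / z) ^ (n + 2) / (n + 2).factorial)⁻¹ :=
        inv_anti₀ hlhs h
      rw [neg_div, Real.exp_neg]
      refine h2.trans_eq ?_
      rw [div_pow]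
      field_simp
      rw [← mul_pow]
      congr 1
      field_simp
    have halg : (z ^ (n + 1))⁻¹ * ((n + 2).factorial * (z / c) ^ (n + 2)) =
        ((n + 2).factorial / c ^ (n + 2)) * z := by
      have hz' : z ≠ 0 := hz.ne'
      have hc' : c ≠ 0 := hc.ne'
      rw [div_pow]
      field_simp
      ring
    have hmono : (z ^ (n + 1))⁻¹ * Real.exp (-c / z) ≤
        (z ^ (n + 1))⁻¹ * ((n + 2).factorial * (z / c) ^ (n + 2)) := by
      apply mul_le_mul_of_nonneg_left hkey (by positivity)
    rw [hmin]
    refine hmono.trans ?_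
    rw [halg]
    exact mul_le_mul_of_nonneg_right (le_max_right _ _) hz.le

lemma corm_aux_min_integrable (ρ : Measure ℝ)
    (hρ_levy : ∫⁻ z in Ioi (0 : ℝ), ENNReal.ofReal (min 1 z) ∂ρ < ⊤) :
    Integrable (fun z : ℝ => min 1 z) (ρ.restrict (Ioi 0)) := by
  refine ⟨(continuous_const.min continuous_id).aestronglyMeasurable, ?_⟩
  rw [HasFiniteIntegral]
  have : ∫⁻ z in Ioi (0 : ℝ), (‖min 1 z‖₊ : ENNReal) ∂ρ
      = ∫⁻ z in Ioi (0 : ℝ), ENNReal.ofReal (min 1 z) ∂ρ := by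
    refine setLIntegral_congr_fun measurableSet_Ioi (fun z hz => ?_)
    exact Real.enorm_eq_ofReal (le_min zero_le_one (le_of_lt hz))
  refine lt_of_eq_of_lt this ?_
  exact hρ_levy

lemma corm_aux_contOn (n : ℕ) (s : ℝ) :
    ContinuousOn (fun z : ℝ => (z ^ (n + 1))⁻¹ * Real.exp (-s / z)) (Ioi 0) := by
  have h1 : ContinuousOn (fun z : ℝ => (z ^ (n + 1))⁻¹) (Ioi 0) :=
    (continuousOn_pow (n + 1)).inv₀ fun z hz => pow_ne_zero _ (ne_of_gt hz)
  have h2 : ContinuousOn (fun z : ℝ => Real.exp (-s / z)) (Ioi 0) :=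
    Real.continuous_exp.comp_continuousOn
      (continuousOn_const.div continuousOn_id fun z hz => ne_of_gt hz)
  exact h1.mul h2

lemma corm_aux_F_int (ρ : Measure ℝ)
    (hρ_levy : ∫⁻ z in Ioi (0 : ℝ), ENNReal.ofReal (min 1 z) ∂ρ < ⊤)
    (n : ℕ) {s : ℝ} (hs : 0 < s) :
    Integrable (fun z : ℝ => (z ^ (n + 1))⁻¹ * Real.exp (-s / z)) (ρ.restrict (Ioi 0)) := by
  refine Integrable.mono (((corm_aux_min_integrable ρ hρ_levy).const_mul
    (max 1 ((n + 2).factorial / s ^ (n + 2))))) ?_ ?_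
  · exact (corm_aux_contOn n s).aestronglyMeasurable measurableSet_Ioi
  · filter_upwards [ae_restrict_mem measurableSet_Ioi] with z hz
    have hz' : (0 : ℝ) < z := hz
    have hb := corm_aux_bound n hs hz'
    have hnn : 0 ≤ (z ^ (n + 1))⁻¹ * Real.exp (-s / z) := by positivity
    rw [Real.norm_eq_abs, abs_of_nonneg hnn]
    exact hb.trans (le_abs_self _)

lemma corm_aux_hasDerivAt (ρ : Measure ℝ)
    (hρ_levy : ∫⁻ z in Ioi (0 : ℝ), ENNReal.ofReal (min 1 z) ∂ρ < ⊤)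
    (n : ℕ) {s : ℝ} (hs : 0 < s) :
    HasDerivAt (fun t : ℝ => ∫ z in Ioi (0 : ℝ), (z ^ (n + 1))⁻¹ * Real.exp (-t / z) ∂ρ)
      (-(∫ z in Ioi (0 : ℝ), (z ^ (n + 2))⁻¹ * Real.exp (-s / z) ∂ρ)) s := by
  have hε : (0 : ℝ) < s / 2 := by linarith
  have key := hasDerivAt_integral_of_dominated_loc_of_deriv_le
    (μ := ρ.restrict (Ioi 0))
    (F := fun (t : ℝ) (z : ℝ) => (z ^ (n + 1))⁻¹ * Real.exp (-t / z))
    (F' := fun (t : ℝ) (z : ℝ) => -((z ^ (n + 2))⁻¹ * Real.exp (-t / z)))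
    (x₀ := s) (s := Metric.ball s (s / 2))
    (bound := fun z => max 1 ((n + 3).factorial / (s / 2) ^ (n + 3)) * min 1 z)
    (Metric.ball_mem_nhds s hε)
    (Eventually.of_forall fun t =>
      (corm_aux_contOn n t).aestronglyMeasurable measurableSet_Ioi)
    (corm_aux_F_int ρ hρ_levy n hs)
    (((corm_aux_contOn (n + 1) s).aestronglyMeasurable measurableSet_Ioi).neg)
    ?_ ?_ ?_
  · have := key.2
    rwa [integral_neg] at this
  · -- bound
    filter_upwards [ae_restrict_mem measurableSet_Ioi] with z hz t ht
    have hz' : (0 : ℝ) < z := hz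
    have ht2 : s / 2 < t := by
      have := abs_sub_lt_iff.1 (mem_ball_iff_norm.1 ht)
      linarith [this.2]
    have hexp : Real.exp (-t / z) ≤ Real.exp (-(s / 2) / z) := by
      apply Real.exp_le_exp.2
      rw [neg_div, neg_div]
      apply neg_le_neg
      exact div_le_div_of_nonneg_right ht2.le hz'.le
    have hnn : 0 ≤ (z ^ (n + 2))⁻¹ * Real.exp (-t / z) := by positivity
    rw [norm_neg, Real.norm_eq_abs, abs_of_nonneg hnn]
    calc (z ^ (n + 2))⁻¹ * Real.exp (-t / z)
        ≤ (z ^ (n + 2))⁻¹ * Real.exp (-(s / 2) / z) :=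
          mul_le_mul_of_nonneg_left hexp (by positivity)
      _ = (z ^ ((n + 1) + 1))⁻¹ * Real.exp (-(s / 2) / z) := by norm_num
      _ ≤ max 1 (((n + 1) + 2).factorial / (s / 2) ^ ((n + 1) + 2)) * min 1 z :=
          corm_aux_bound (n + 1) hε hz'
      _ = max 1 ((n + 3).factorial / (s / 2) ^ (n + 3)) * min 1 z := by norm_num
  · exact (corm_aux_min_integrable ρ hρ_levy).const_mul _
  · -- differentiability
    filter_upwards [ae_restrict_mem measurableSet_Ioi] with z hz t _
    have hz' : (0 : ℝ) < z := hz
    have hz0 : z ≠ 0 := hz'.ne'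
    have h1 : HasDerivAt (fun t : ℝ => -t / z) (-z⁻¹) t := by
      simpa [neg_div, one_div] using (hasDerivAt_neg t).div_const z
    have h2 : HasDerivAt (fun t : ℝ => Real.exp (-t / z))
        (Real.exp (-t / z) * (-z⁻¹)) t := (Real.hasDerivAt_exp _).comp t h1
    have h3 := h2.const_mul ((z ^ (n + 1))⁻¹)
    refine h3.congr_deriv ?_
    have : z ^ (n + 2) = z ^ (n + 1) * z := by ring
    rw [this, mul_inv]
    ring

lemma corm_aux_normC (w : ℂ) (m : ℕ) {z : ℝ} (hz : 0 < z) :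
    ‖((z : ℂ) ^ (m + 1))⁻¹ * Complex.exp (-w / (z : ℂ))‖
      = (z ^ (m + 1))⁻¹ * Real.exp (-w.re / z) := by
  rw [norm_mul, norm_inv, norm_pow, Complex.norm_exp]
  have h1 : ‖(z : ℂ)‖ = z := by
    rw [Complex.norm_real, Real.norm_eq_abs, abs_of_pos hz]
  have h2 : (-w / (z : ℂ)).re = -w.re / z := by
    rw [Complex.div_ofReal_re, Complex.neg_re]
  rw [h1, h2]

lemma corm_aux_contC (w : ℂ) (m : ℕ) :
    ContinuousOn (fun z : ℝ => ((z : ℂ) ^ (m + 1))⁻¹ * Complex.exp (-w / (z : ℂ))) (Ioi 0) := by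
  have h1 : ContinuousOn (fun z : ℝ => ((z : ℂ) ^ (m + 1))⁻¹) (Ioi 0) :=
    ((Complex.continuous_ofReal.pow (m + 1)).continuousOn).inv₀ fun z hz =>
      pow_ne_zero _ (Complex.ofReal_ne_zero.2 (ne_of_gt hz))
  have h2 : ContinuousOn (fun z : ℝ => Complex.exp (-w / (z : ℂ))) (Ioi 0) :=
    Complex.continuous_exp.comp_continuousOn
      (continuousOn_const.div Complex.continuous_ofReal.continuousOn fun z hz =>
        Complex.ofReal_ne_zero.2 (ne_of_gt hz))
  exact h1.mul h2

lemma corm_aux_intC (ρ : Measure ℝ)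
    (hρ_levy : ∫⁻ z in Ioi (0 : ℝ), ENNReal.ofReal (min 1 z) ∂ρ < ⊤)
    (m : ℕ) {w : ℂ} (hw : 0 < w.re) :
    Integrable (fun z : ℝ => ((z : ℂ) ^ (m + 1))⁻¹ * Complex.exp (-w / (z : ℂ)))
      (ρ.restrict (Ioi 0)) := by
  refine Integrable.mono (corm_aux_F_int ρ hρ_levy m hw) ?_ ?_
  · exact (corm_aux_contC w m).aestronglyMeasurable measurableSet_Ioi
  · filter_upwards [ae_restrict_mem measurableSet_Ioi] with z hz
    have hz' : (0 : ℝ) < z := hz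
    rw [corm_aux_normC w m hz']
    have hnn : 0 ≤ (z ^ (m + 1))⁻¹ * Real.exp (-w.re / z) := by positivity
    rw [Real.norm_eq_abs, abs_of_nonneg hnn]

lemma corm_aux_hasDerivAtC (ρ : Measure ℝ)
    (hρ_levy : ∫⁻ z in Ioi (0 : ℝ), ENNReal.ofReal (min 1 z) ∂ρ < ⊤)
    {w : ℂ} (hw : 0 < w.re) :
    HasDerivAt
      (fun w' : ℂ => ∫ z in Ioi (0 : ℝ), ((z : ℂ) ^ (0 + 1))⁻¹ * Complex.exp (-w' / (z : ℂ)) ∂ρ)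
      (∫ z in Ioi (0 : ℝ), -(((z : ℂ) ^ (1 + 1))⁻¹ * Complex.exp (-w / (z : ℂ))) ∂ρ) w := by
  have hε : (0 : ℝ) < w.re / 2 := by linarith
  have key := hasDerivAt_integral_of_dominated_loc_of_deriv_le
    (μ := ρ.restrict (Ioi 0))
    (F := fun (w' : ℂ) (z : ℝ) => ((z : ℂ) ^ (0 + 1))⁻¹ * Complex.exp (-w' / (z : ℂ)))
    (F' := fun (w' : ℂ) (z : ℝ) => -(((z : ℂ) ^ (1 + 1))⁻¹ * Complex.exp (-w' / (z : ℂ))))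
    (x₀ := w) (s := Metric.ball w (w.re / 2))
    (bound := fun z => max 1 ((1 + 2).factorial / (w.re / 2) ^ (1 + 2)) * min 1 z)
    (Metric.ball_mem_nhds w hε)
    (Eventually.of_forall fun w' =>
      (corm_aux_contC w' 0).aestronglyMeasurable measurableSet_Ioi)
    (corm_aux_intC ρ hρ_levy 0 hw)
    (((corm_aux_contC w 1).aestronglyMeasurable measurableSet_Ioi).neg)
    ?_ ?_ ?_
  · exact key.2
  · filter_upwards [ae_restrict_mem measurableSet_Ioi] with z hz w' hw'
    have hz' : (0 : ℝ) < z := hz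
    have hre : w.re / 2 < w'.re := by
      have h1 : |w'.re - w.re| ≤ ‖w' - w‖ := by
        simpa using Complex.abs_re_le_norm (w' - w)
      have h2 : ‖w' - w‖ < w.re / 2 := mem_ball_iff_norm.1 hw'
      have := abs_sub_lt_iff.1 (lt_of_le_of_lt h1 h2)
      linarith [this.2]
    rw [norm_neg, corm_aux_normC w' 1 hz']
    have hexp : Real.exp (-w'.re / z) ≤ Real.exp (-(w.re / 2) / z) := by
      apply Real.exp_le_exp.2
      rw [neg_div, neg_div]
      exact neg_le_neg (div_le_div_of_nonneg_right hre.le hz'.le)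
    exact le_trans (mul_le_mul_of_nonneg_left hexp (by positivity))
      (corm_aux_bound 1 hε hz')
  · exact (corm_aux_min_integrable ρ hρ_levy).const_mul _
  · filter_upwards [ae_restrict_mem measurableSet_Ioi] with z hz w' _
    have hz' : (0 : ℝ) < z := hz
    have hz0 : (z : ℂ) ≠ 0 := Complex.ofReal_ne_zero.2 hz'.ne'
    have h1 : HasDerivAt (fun w' : ℂ => -w' / (z : ℂ)) (-(z : ℂ)⁻¹) w' := by
      simpa [neg_div, one_div] using (hasDerivAt_neg w').div_const (z : ℂ)
    have h2 : HasDerivAt (fun w' : ℂ => Complex.exp (-w' / (z : ℂ)))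
        (Complex.exp (-w' / (z : ℂ)) * (-(z : ℂ)⁻¹)) w' :=
      (Complex.hasDerivAt_exp _).comp w' h1
    have h3 := h2.const_mul (((z : ℂ) ^ (0 + 1))⁻¹)
    refine h3.congr_deriv ?_
    have : (z : ℂ) ^ (1 + 1) = (z : ℂ) ^ (0 + 1) * (z : ℂ) := by ring
    rw [this, mul_inv]
    ring

/-- The complex extension is analytic on the right half-plane, hence `f` is
real-analytic (`C^ω`) on `(0,∞)`. -/
lemma corm_aux_contDiffOn (ρ : Measure ℝ)
    (hρ_levy : ∫⁻ z in Ioi (0 : ℝ), ENNReal.ofReal (min 1 z) ∂ρ < ⊤)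
    (f : ℝ → ℝ)
    (hf : ∀ s : ℝ, f s = ∫ z in Ioi (0 : ℝ), z⁻¹ * Real.exp (-s / z) ∂ρ) :
    ContDiffOn ℝ (⊤ : ℕ∞) f (Ioi 0) := by
  set Fc : ℂ → ℂ :=
    fun w' : ℂ => ∫ z in Ioi (0 : ℝ), ((z : ℂ) ^ (0 + 1))⁻¹ * Complex.exp (-w' / (z : ℂ)) ∂ρ
    with hFc
  have hopen : IsOpen {w : ℂ | 0 < w.re} := isOpen_lt continuous_const Complex.continuous_re
  have hFan : AnalyticOnNhd ℂ Fc {w : ℂ | 0 < w.re} := by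
    apply DifferentiableOn.analyticOnNhd _ hopen
    intro w hw
    exact ((corm_aux_hasDerivAtC ρ hρ_levy hw).differentiableAt).differentiableWithinAt
  have hEq : ∀ t : ℝ, 0 < t → f t = Complex.reCLM (Fc (Complex.ofRealCLM t)) := by
    intro t ht
    have hcongr : Fc ((t : ℂ))
        = (((∫ z in Ioi (0 : ℝ), z⁻¹ * Real.exp (-t / z) ∂ρ : ℝ)) : ℂ) := by
      simp only [hFc]
      have : ∀ z ∈ Ioi (0 : ℝ),
          ((z : ℂ) ^ (0 + 1))⁻¹ * Complex.exp (-(t : ℂ) / (z : ℂ))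
            = (((z⁻¹ * Real.exp (-t / z) : ℝ)) : ℂ) := by
        intro z hz
        rw [pow_one, Complex.ofReal_mul, Complex.ofReal_exp, Complex.ofReal_inv,
          Complex.ofReal_div, Complex.ofReal_neg]
      rw [setIntegral_congr_fun measurableSet_Ioi this]
      exact integral_ofReal
    simp only [Complex.ofRealCLM_apply, Complex.reCLM_apply]
    rw [hcongr, Complex.ofReal_re, hf]
  have han : AnalyticOnNhd ℝ f (Ioi 0) := by
    intro t ht
    have ht' : (0 : ℝ) < t := ht
    have ha : AnalyticAt ℝ Fc ((Complex.ofRealCLM t : ℂ)) := by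
      have := hFan (Complex.ofRealCLM t) (by simpa using ht')
      exact this.restrictScalars
    have hb : AnalyticAt ℝ (Complex.ofRealCLM : ℝ → ℂ) t :=
      Complex.ofRealCLM.analyticAt t
    have hc : AnalyticAt ℝ (Complex.reCLM : ℂ → ℝ) (Fc (Complex.ofRealCLM t)) :=
      Complex.reCLM.analyticAt _
    have h1 := (hc.comp ha).comp hb
    apply h1.congr
    filter_upwards [isOpen_Ioi.mem_nhds ht] with u hu
    exact (hEq u hu).symm
  exact han.contDiffOn (uniqueDiffOn_Ioi 0)

set_option maxHeartbeats 1000000 in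
/-- **Theorem 4**: for a homogeneous Lévy intensity `ρ*` on `(0,∞)`, the marginal
density `f(s) = ∫ z⁻¹ e^{-s/z} dρ*(z)` of a CoRM with independent standard
exponential scores is infinitely differentiable on `(0,∞)`, with
`(-1)^k f^{(k)}(s) = ∫ z^{-(k+1)} e^{-s/z} dρ*(z)`; in particular the `d`-variate
density `ρ̃_d(s₁,…,s_d) = ∫ z^{-d} e^{-(s₁+⋯+s_d)/z} dρ*(z)` equals
`(-1)^{d-1} f^{(d-1)}(s₁+⋯+s_d)`. -/
theorem corm_exponential_scores_density
    (ρ : Measure ℝ) (hρ_supp : ρ {z : ℝ | z ≤ 0} = 0)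
    (hρ_levy : ∫⁻ z in Ioi (0 : ℝ), ENNReal.ofReal (min 1 z) ∂ρ < ⊤)
    (f : ℝ → ℝ)
    (hf : ∀ s : ℝ, f s = ∫ z in Ioi (0 : ℝ), z⁻¹ * Real.exp (-s / z) ∂ρ) :
    ContDiffOn ℝ (⊤ : ℕ∞) f (Ioi 0) ∧
    (∀ (k : ℕ), ∀ s > (0 : ℝ),
      (-1 : ℝ) ^ k * iteratedDerivWithin k f (Ioi 0) s
        = ∫ z in Ioi (0 : ℝ), z ^ (-((k : ℤ) + 1)) * Real.exp (-s / z) ∂ρ) ∧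
    (∀ d : ℕ, 1 ≤ d → ∀ s : Fin d → ℝ, (∀ j, 0 < s j) →
      (∫ z in Ioi (0 : ℝ), z ^ (-(d : ℤ)) * Real.exp (-(∑ j, s j) / z) ∂ρ)
        = (-1 : ℝ) ^ (d - 1) * iteratedDerivWithin (d - 1) f (Ioi 0) (∑ j, s j)) := by
  classical
  set g : ℕ → ℝ → ℝ :=
    fun n t => ∫ z in Ioi (0 : ℝ), (z ^ (n + 1))⁻¹ * Real.exp (-t / z) ∂ρ with hg
  have hfg : ∀ t, f t = g 0 t := by
    intro t
    rw [hf t, hg]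
    simp [pow_one]
  have hder : ∀ (n : ℕ) (t : ℝ), 0 < t → HasDerivAt (g n) (-(g (n + 1) t)) t := by
    intro n t ht
    simpa [hg] using corm_aux_hasDerivAt ρ hρ_levy n ht
  have hiter : ∀ k : ℕ, ∀ t ∈ Ioi (0 : ℝ),
      iteratedDerivWithin k f (Ioi 0) t = (-1 : ℝ) ^ k * g k t := by
    intro k
    induction k with
    | zero => intro t ht; simpa using (hfg t)
    | succ k ih =>
      intro t ht
      rw [iteratedDerivWithin_succ,
        derivWithin_of_isOpen isOpen_Ioi ht]
      have hev : iteratedDerivWithin k f (Ioi 0) =ᶠ[nhds t]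
          fun u => (-1 : ℝ) ^ k * g k u :=
        eventually_of_mem (isOpen_Ioi.mem_nhds ht) ih
      rw [hev.deriv_eq]
      rw [((hder k t ht).const_mul ((-1 : ℝ) ^ k)).deriv]
      ring
  have hmain : ∀ (k : ℕ), ∀ s > (0 : ℝ),
      (-1 : ℝ) ^ k * iteratedDerivWithin k f (Ioi 0) s
        = ∫ z in Ioi (0 : ℝ), z ^ (-((k : ℤ) + 1)) * Real.exp (-s / z) ∂ρ := by
    intro k s hs
    rw [hiter k s hs, ← mul_assoc, ← mul_pow]
    have hzpow : ∀ z : ℝ, z ^ (-((k : ℤ) + 1)) = (z ^ (k + 1))⁻¹ := by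
      intro z
      rw [show -((k : ℤ) + 1) = Int.negSucc k from (Int.negSucc_eq k).symm, zpow_negSucc]
    simp_rw [hzpow]
    norm_num [hg]
  refine ⟨corm_aux_contDiffOn ρ hρ_levy f hf, hmain, ?_⟩
  intro d hd s hspos
  have : Nonempty (Fin d) := Fin.pos_iff_nonempty.mp (by omega)
  have hsum : 0 < ∑ j, s j := Finset.sum_pos (fun j _ => hspos j) Finset.univ_nonempty
  have hcast : -(((d - 1 : ℕ) : ℤ) + 1) = -(d : ℤ) := by omega
  have h2 := (hmain (d - 1) _ hsum).symm
  rw [hcast] at h2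
  exact h2
end
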